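/- Every subgraph of the book graph $B_{s,t}$, after performing any single elementary operation (vertex deletion, edge deletion, or edge contraction), is isomorphic to a subgraph of $B_{s,t}$. Consequently, every minor of $B_{s,t}$ is isomorphic to a subgraph of $B_{s,t}$. -/

import Mathlib

/-- `G` contains `H` as a minor. -/
def SimpleGraph.HasMinor {V : Type*} {W : Type*} (G : SimpleGraph V) (H : SimpleGraph W) :
    Prop :=
  ∃ f : W → Set V,
    (∀ w, (f w).Nonempty) ∧
    (∀ w, (G.induce (f w)).Connected) ∧
    (Pairwise fun w₁ w₂ => Disjoint (f w₁) (f w₂)) ∧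
    (∀ ⦃w₁ w₂⦄, H.Adj w₁ w₂ → ∃ v₁ ∈ f w₁, ∃ v₂ ∈ f w₂, G.Adj v₁ v₂)

/-- The book graph `B_{s,t}`: the join of a clique on `s` vertices with an independent set
of `t` vertices. -/
def book (s t : ℕ) : SimpleGraph (Fin s ⊕ Fin t) where
  Adj a b := a ≠ b ∧ (a.isLeft ∨ b.isLeft)
  symm := by refine ⟨?_⟩; rintro a b ⟨h1, h2⟩; exact ⟨h1.symm, h2.symm⟩
  loopless := by refine ⟨?_⟩; rintro a ⟨h, _⟩; exact h rfl

/-- `H` is isomorphic to a subgraph of the book `B_{s,t}`. -/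
def IsSubBook (s t : ℕ) {U : Type*} (H : SimpleGraph U) : Prop :=
  ∃ f : U ↪ (Fin s ⊕ Fin t), ∀ a b : U, H.Adj a b → (book s t).Adj (f a) (f b)

/-- The graph obtained from `G` by contracting the vertex `v` into the vertex `u`
(when `uv` is an edge, this is the contraction of that edge). -/
def contractEdge {V : Type*} (G : SimpleGraph V) (u v : V) :
    SimpleGraph {x : V // x ≠ v} where
  Adj a b := a ≠ b ∧ (G.Adj a.1 b.1 ∨ ((a.1 = u ∧ G.Adj v b.1) ∨ (b.1 = u ∧ G.Adj v a.1)))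
  symm := by
    refine ⟨?_⟩
    rintro a b ⟨h1, h2⟩
    refine ⟨h1.symm, ?_⟩
    rcases h2 with h | h | h
    · exact Or.inl h.symm
    · exact Or.inr (Or.inr h)
    · exact Or.inr (Or.inl h)
  loopless := by refine ⟨?_⟩; rintro a ⟨h, _⟩; exact h rfl

/-!
A graph on `U` is a subgraph of `B_{s,t}` exactly when `U` injects into the `s + t` vertices so
that every edge has an endpoint among the `s` clique vertices. Deleting vertices or edges keeps
such an injection. Contracting an edge `uv` keeps it once the merged vertex is placed at
whichever of `u`, `v` sits in the clique. A minor is handled by representing each branch set by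
one of its vertices, chosen in the clique whenever the branch set meets it.
-/

open SimpleGraph

variable {s t : ℕ} {U U' : Type*} {H : SimpleGraph U}

theorem isSubBook_iff_isContained : IsSubBook s t H ↔ H ⊑ book s t := by
  rw [isContained_iff_exists_le_comap]
  rfl

theorem IsSubBook.of_isContained {H' : SimpleGraph U'} (hH : IsSubBook s t H) (h : H' ⊑ H) :
    IsSubBook s t H' :=
  isSubBook_iff_isContained.2 (h.trans (isSubBook_iff_isContained.1 hH))

theorem isSubBook_iff_exists_isLeft :
    IsSubBook s t H ↔
      ∃ f : U ↪ Fin s ⊕ Fin t, ∀ ⦃a b⦄, H.Adj a b → (f a).isLeft ∨ (f b).isLeft :=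
  ⟨fun ⟨f, hf⟩ => ⟨f, fun a b h => (hf a b h).2⟩,
    fun ⟨f, hf⟩ => ⟨f, fun _ _ h => ⟨f.injective.ne h.ne, hf h⟩⟩⟩

theorem adj_of_contractEdge_adj {u v : U} {a b : {x // x ≠ v}}
    (h : (contractEdge H u v).Adj a b) (ha : a.1 ≠ u) (hb : b.1 ≠ u) : H.Adj a b := by
  obtain ⟨-, hab | ⟨rfl, -⟩ | ⟨rfl, -⟩⟩ := h
  exacts [hab, absurd rfl ha, absurd rfl hb]

theorem IsSubBook.contractEdge (hH : IsSubBook s t H) {u v : U} (huv : H.Adj u v) :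
    IsSubBook s t (contractEdge H u v) := by
  classical
  obtain ⟨f, hf⟩ := isSubBook_iff_exists_isLeft.1 hH
  -- `σ u` is an endpoint of `uv` sent into the clique; the merged vertex goes to its image.
  obtain ⟨σ, hσu, hσ⟩ : ∃ σ : Equiv.Perm U,
      (f (σ u)).isLeft ∧ ∀ x, x ≠ u → x ≠ v → σ x = x := by
    rcases hf huv with h | h
    · exact ⟨1, h, fun _ _ _ => rfl⟩
    · exact ⟨Equiv.swap u v, by simpa, fun _ => Equiv.swap_apply_of_ne_of_ne⟩
  refine isSubBook_iff_exists_isLeft.2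
    ⟨(Function.Embedding.subtype _).trans (σ.toEmbedding.trans f), fun a b hab => ?_⟩
  simp only [Function.Embedding.trans_apply, Function.Embedding.subtype_apply,
    Equiv.toEmbedding_apply]
  by_cases hau : a.1 = u
  · exact Or.inl (hau ▸ hσu)
  by_cases hbu : b.1 = u
  · exact Or.inr (hbu ▸ hσu)
  rw [hσ a hau a.2, hσ b hbu b.2]
  exact hf (adj_of_contractEdge_adj hab hau hbu)

theorem IsSubBook.of_hasMinor (h : (book s t).HasMinor H) : IsSubBook s t H := by
  obtain ⟨B, hB, -, hdisj, hadj⟩ := h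
  have pick : ∀ w, ∃ x ∈ B w, (∃ y ∈ B w, y.isLeft) → x.isLeft := by
    intro w
    by_cases hw : ∃ y ∈ B w, y.isLeft
    · obtain ⟨y, hy, hyl⟩ := hw
      exact ⟨y, hy, fun _ => hyl⟩
    · obtain ⟨x, hx⟩ := hB w
      exact ⟨x, hx, fun h => absurd h hw⟩
  choose g hgB hgLeft using pick
  have hg : Function.Injective g := fun a b hab => by_contra fun hne =>
    Set.disjoint_left.1 (hdisj hne) (hgB a) (hab ▸ hgB b)
  refine isSubBook_iff_exists_isLeft.2 ⟨⟨g, hg⟩, fun a b hab => ?_⟩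
  obtain ⟨x, hx, y, hy, -, hxy⟩ := hadj hab
  exact hxy.imp (fun hx' => hgLeft a ⟨x, hx, hx'⟩) (fun hy' => hgLeft b ⟨y, hy, hy'⟩)

/-- Any graph isomorphic to a subgraph of the book `B_{s,t}` remains
isomorphic to a subgraph of `B_{s,t}` after any single elementary operation (vertex
deletion, edge deletion, or edge contraction); consequently, every minor of `B_{s,t}`
is isomorphic to a subgraph of `B_{s,t}`. -/
theorem book_minor_closed (s t : ℕ) :
    (∀ (U : Type) (H : SimpleGraph U), IsSubBook s t H →
      (∀ v : U, IsSubBook s t (H.induce {x | x ≠ v})) ∧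
      (∀ e : Sym2 U, IsSubBook s t (H.deleteEdges {e})) ∧
      (∀ u v : U, H.Adj u v → IsSubBook s t (contractEdge H u v))) ∧
    (∀ (U : Type) (H : SimpleGraph U), (book s t).HasMinor H → IsSubBook s t H) :=
  ⟨fun _ H hH =>
    ⟨fun _ => hH.of_isContained (Copy.induce H _).isContained,
      fun _ => hH.of_isContained (IsContained.of_le (deleteEdges_le _)),
      fun _ _ => hH.contractEdge⟩,
    fun _ _ => IsSubBook.of_hasMinor⟩
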